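/- Every αh-perfect graph is perfect; that is, if for every induced subgraph H of G the achromatic number of H equals the Hadwiger number of H, then for every induced subgraph H of G the chromatic number of H equals the clique number of H. -/

import Mathlib

open SimpleGraph

/-- A `k`-coloring `c` of `G` is *complete* if it is surjective and for every pair of distinct
colors there is an edge of `G` whose endpoints receive those two colors. -/
def IsCompleteColoring {V : Type*} (G : SimpleGraph V) {k : ℕ} (c : V → Fin k) : Prop :=
  Function.Surjective c ∧
    ∀ i j : Fin k, i ≠ j → ∃ u v : V, G.Adj u v ∧ c u = i ∧ c v = j

/-- A coloring is *proper* if adjacent vertices receive distinct colors. -/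
def IsProperColoring {V : Type*} (G : SimpleGraph V) {k : ℕ} (c : V → Fin k) : Prop :=
  ∀ u v : V, G.Adj u v → c u ≠ c v

/-- A `k`-coloring `c` of `G` is *dominating* if it is surjective and every color class contains
a vertex having a neighbor in every other color class. -/
def IsDominatingColoring {V : Type*} (G : SimpleGraph V) {k : ℕ} (c : V → Fin k) : Prop :=
  Function.Surjective c ∧
    ∀ i : Fin k, ∃ v : V, c v = i ∧ ∀ j : Fin k, j ≠ i → ∃ u : V, G.Adj v u ∧ c u = j

/-- A `k`-coloring `c` of `G` is *pseudo-Grundy* if it is surjective and every vertex is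
adjacent to at least one vertex of each smaller color. -/
def IsPseudoGrundyColoring {V : Type*} (G : SimpleGraph V) {k : ℕ} (c : V → Fin k) : Prop :=
  Function.Surjective c ∧
    ∀ v : V, ∀ j : Fin k, j < c v → ∃ u : V, G.Adj v u ∧ c u = j

/-- The pseudoachromatic number `ψ(G)`: the largest `k` admitting a complete `k`-coloring. -/
noncomputable def pseudoachromaticNumber {V : Type*} (G : SimpleGraph V) : ℕ :=
  sSup {k | ∃ c : V → Fin k, IsCompleteColoring G c}

/-- The achromatic number `α(G)`: the largest `k` admitting a proper complete `k`-coloring. -/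
noncomputable def achromaticNumber {V : Type*} (G : SimpleGraph V) : ℕ :=
  sSup {k | ∃ c : V → Fin k, IsProperColoring G c ∧ IsCompleteColoring G c}

/-- The b-chromatic number `b(G)`: the largest `k` admitting a proper dominating `k`-coloring. -/
noncomputable def bChromaticNumber {V : Type*} (G : SimpleGraph V) : ℕ :=
  sSup {k | ∃ c : V → Fin k, IsProperColoring G c ∧ IsDominatingColoring G c}

/-- The pseudo-b-chromatic number `B(G)`: the largest `k` admitting a dominating `k`-coloring. -/
noncomputable def pseudoBChromaticNumber {V : Type*} (G : SimpleGraph V) : ℕ :=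
  sSup {k | ∃ c : V → Fin k, IsDominatingColoring G c}

/-- The Grundy number `Γ(G)`: the largest `k` admitting a proper pseudo-Grundy `k`-coloring. -/
noncomputable def grundyNumber {V : Type*} (G : SimpleGraph V) : ℕ :=
  sSup {k | ∃ c : V → Fin k, IsProperColoring G c ∧ IsPseudoGrundyColoring G c}

/-- The pseudo-Grundy number `γ(G)`: the largest `k` admitting a pseudo-Grundy `k`-coloring. -/
noncomputable def pseudoGrundyNumber {V : Type*} (G : SimpleGraph V) : ℕ :=
  sSup {k | ∃ c : V → Fin k, IsPseudoGrundyColoring G c}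

/-- `G` contains the complete graph `K_k` as a minor: there are `k` pairwise disjoint
"branch sets", each inducing a connected (nonempty) subgraph, with an edge of `G` between
every two of them. -/
def HasCompleteMinor {V : Type*} (G : SimpleGraph V) (k : ℕ) : Prop :=
  ∃ B : Fin k → Set V,
    (∀ i, (G.induce (B i)).Connected) ∧
    (∀ i j : Fin k, i ≠ j → Disjoint (B i) (B j)) ∧
    (∀ i j : Fin k, i ≠ j → ∃ u ∈ B i, ∃ v ∈ B j, G.Adj u v)

/-- The Hadwiger number `h(G)`: the largest `k` such that `K_k` is a minor of `G`. -/
noncomputable def hadwigerNumber {V : Type*} (G : SimpleGraph V) : ℕ :=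
  sSup {k | HasCompleteMinor G k}

/-- `G` has an induced subgraph isomorphic to `H`. -/
def HasInducedCopy {V : Type*} {W : Type*} (G : SimpleGraph V) (H : SimpleGraph W) : Prop :=
  ∃ s : Set V, Nonempty (G.induce s ≃g H)

/-- A graph is *chordal* if it has no induced cycle on four or more vertices. -/
def IsChordal {V : Type*} (G : SimpleGraph V) : Prop :=
  ∀ n : ℕ, 4 ≤ n → ¬ HasInducedCopy G (cycleGraph n)

/-- The diamond graph `D`: `K₄` minus one edge. -/
def diamondGraph : SimpleGraph (Fin 4) :=
  (⊤ : SimpleGraph (Fin 4)).deleteEdges {s(0, 1)}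

/-!
An induced path `P₄` has achromatic number 3 but no `K₃` minor, while an induced 4-cycle has a
`K₃` minor but no complete proper colouring with 3 or more colours. So an αh-perfect graph, and
each of its induced subgraphs, is `{P₄, C₄}`-free: along every edge the closed neighbourhoods
are nested. Rank the vertices by closed neighbourhood under inclusion, breaking ties between
twins arbitrarily. The vertices ranked above `v` are pairwise adjacent and adjacent to `v`, and
their number strictly drops along every edge, so counting them is a proper colouring with
`ω` colours.
-/

section CompleteColoringsAndMinors

variable {V W : Type*} {G : SimpleGraph V} {H : SimpleGraph W}

lemma IsCompleteColoring.le_card [Finite V] {k : ℕ} {c : V → Fin k}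
    (hc : IsCompleteColoring G c) : k ≤ Nat.card V := by
  simpa using Nat.card_le_card_of_surjective c hc.1

lemma HasCompleteMinor.le_card [Finite V] {k : ℕ} (h : HasCompleteMinor G k) :
    k ≤ Nat.card V := by
  obtain ⟨B, hconn, hdisj, -⟩ := h
  choose f hf using fun i => Set.nonempty_coe_sort.mp (hconn i).nonempty
  have hinj : Function.Injective f := fun i j hij => by
    by_contra hne
    exact Set.disjoint_left.mp (hdisj i j hne) (hf i) (hij ▸ hf j)
  simpa using Nat.card_le_card_of_injective f hinj

lemma HasCompleteMinor.mono {k m : ℕ} (h : HasCompleteMinor G k) (hmk : m ≤ k) :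
    HasCompleteMinor G m := by
  obtain ⟨B, hconn, hdisj, hadj⟩ := h
  have hinj := Fin.castLE_injective hmk
  exact ⟨B ∘ Fin.castLE hmk, fun i => hconn _, fun i j hij => hdisj _ _ (hinj.ne hij),
    fun i j hij => hadj _ _ (hinj.ne hij)⟩

lemma HasCompleteMinor.map (f : Copy G H) {k : ℕ} (h : HasCompleteMinor G k) :
    HasCompleteMinor H k := by
  obtain ⟨B, hconn, hdisj, hadj⟩ := h
  refine ⟨fun i => f '' B i, fun i => ?_, fun i j hij => ?_, fun i j hij => ?_⟩
  · refine (hconn i).map (induceHom f.toHom (Set.mapsTo_image _ _)) ?_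
    rintro ⟨-, x, hx, rfl⟩
    exact ⟨⟨x, hx⟩, rfl⟩
  · exact (Set.disjoint_image_iff f.injective).mpr (hdisj i j hij)
  · obtain ⟨u, hu, v, hv, huv⟩ := hadj i j hij
    exact ⟨f u, Set.mem_image_of_mem f hu, f v, Set.mem_image_of_mem f hv, f.toHom.map_adj huv⟩

lemma le_achromaticNumber [Finite V] {k : ℕ} {c : V → Fin k} (hp : IsProperColoring G c)
    (hc : IsCompleteColoring G c) : k ≤ achromaticNumber G :=
  le_csSup ⟨Nat.card V, fun _ ⟨_, _, hc⟩ => hc.le_card⟩ ⟨c, hp, hc⟩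

lemma le_hadwigerNumber [Finite V] {k : ℕ} (h : HasCompleteMinor G k) : k ≤ hadwigerNumber G :=
  le_csSup ⟨Nat.card V, fun _ => HasCompleteMinor.le_card⟩ h

lemma achromaticNumber_le {n : ℕ}
    (h : ∀ k (c : V → Fin k), IsProperColoring G c → IsCompleteColoring G c → k ≤ n) :
    achromaticNumber G ≤ n :=
  csSup_le' fun k ⟨c, hp, hc⟩ => h k c hp hc

lemma hadwigerNumber_le_of_not_hasCompleteMinor {k : ℕ} (h : ¬ HasCompleteMinor G (k + 1)) :
    hadwigerNumber G ≤ k :=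
  csSup_le' fun _ hm => Nat.le_of_not_lt fun hlt => h (hm.mono hlt)

lemma IsProperColoring.comp_symm {k : ℕ} {c : V → Fin k} (hc : IsProperColoring G c)
    (e : G ≃g H) : IsProperColoring H (c ∘ e.symm) :=
  fun _ _ huv => hc _ _ (e.symm.map_adj_iff.mpr huv)

lemma IsCompleteColoring.comp_symm {k : ℕ} {c : V → Fin k} (hc : IsCompleteColoring G c)
    (e : G ≃g H) : IsCompleteColoring H (c ∘ e.symm) := by
  refine ⟨hc.1.comp e.symm.surjective, fun i j hij => ?_⟩
  obtain ⟨u, v, huv, rfl, rfl⟩ := hc.2 i j hij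
  exact ⟨e u, e v, e.map_adj_iff.mpr huv, by simp, by simp⟩

lemma achromaticNumber_congr (e : G ≃g H) : achromaticNumber G = achromaticNumber H := by
  unfold achromaticNumber
  congr 1
  ext k
  exact ⟨fun ⟨c, hp, hc⟩ => ⟨_, hp.comp_symm e, hc.comp_symm e⟩,
    fun ⟨c, hp, hc⟩ => ⟨_, hp.comp_symm e.symm, hc.comp_symm e.symm⟩⟩

lemma hadwigerNumber_congr (e : G ≃g H) : hadwigerNumber G = hadwigerNumber H := by
  unfold hadwigerNumber
  congr 1
  ext k
  exact ⟨HasCompleteMinor.map e.toCopy, HasCompleteMinor.map e.symm.toCopy⟩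

lemma hasCompleteMinor_iff_exists_finset [Finite V] {k : ℕ} :
    HasCompleteMinor G k ↔ ∃ B : Fin k → Finset V,
      (∀ i, (G.induce (B i : Set V)).Connected) ∧ (∀ i j, i ≠ j → Disjoint (B i) (B j)) ∧
        ∀ i j, i ≠ j → ∃ u ∈ B i, ∃ v ∈ B j, G.Adj u v := by
  constructor
  · rintro ⟨B, h⟩
    refine ⟨fun i => (B i).toFinite.toFinset, fun i => ?_, ?_⟩
    · rw [Set.Finite.coe_toFinset]
      exact h.1 i
    · simpa only [Set.Finite.mem_toFinset, ← Finset.disjoint_coe, Set.Finite.coe_toFinset]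
        using h.2
  · rintro ⟨B, h⟩
    exact ⟨fun i => B i, by simpa only [Finset.mem_coe, Finset.disjoint_coe] using h⟩

-- Unfolded, with the cheap conjuncts first, so that `decide` can refute it on small graphs.
lemma HasCompleteMinor.exists_three_finsets [Finite V] (h : HasCompleteMinor G 3) :
    ∃ b₀ b₁ b₂ : Finset V, Disjoint b₀ b₁ ∧ Disjoint b₀ b₂ ∧ Disjoint b₁ b₂ ∧
      (∃ u ∈ b₀, ∃ v ∈ b₁, G.Adj u v) ∧ (∃ u ∈ b₀, ∃ v ∈ b₂, G.Adj u v) ∧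
      (∃ u ∈ b₁, ∃ v ∈ b₂, G.Adj u v) ∧ (G.induce (b₀ : Set V)).Connected ∧
      (G.induce (b₁ : Set V)).Connected ∧ (G.induce (b₂ : Set V)).Connected := by
  obtain ⟨B, hconn, hdisj, hadj⟩ := hasCompleteMinor_iff_exists_finset.mp h
  exact ⟨B 0, B 1, B 2, hdisj 0 1 (by decide), hdisj 0 2 (by decide), hdisj 1 2 (by decide),
    hadj 0 1 (by decide), hadj 0 2 (by decide), hadj 1 2 (by decide), hconn 0, hconn 1, hconn 2⟩

lemma achromaticNumber_eq_hadwigerNumber_of_isIndContained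
    (hG : ∀ s : Set V, achromaticNumber (G.induce s) = hadwigerNumber (G.induce s))
    (hH : H ⊴ G) : achromaticNumber H = hadwigerNumber H := by
  obtain ⟨s, ⟨e⟩⟩ := isIndContained_iff_exists_iso_induce.mp hH
  rw [achromaticNumber_congr e, hadwigerNumber_congr e, hG s]

end CompleteColoringsAndMinors

namespace SimpleGraph

instance (n : ℕ) : DecidableRel (pathGraph n).Adj := fun _ _ => decidable_of_iff' _ pathGraph_adj

variable {V : Type*} (G : SimpleGraph V)

def closedNeighborSet (v : V) : Set V := insert v (G.neighborSet v)

def HasNestedNeighborhoods : Prop :=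
  ∀ ⦃a b : V⦄, G.Adj a b →
    G.closedNeighborSet a ⊆ G.closedNeighborSet b ∨ G.closedNeighborSet b ⊆ G.closedNeighborSet a

variable {G} {a b c d : V}

lemma pathGraph_four_isIndContained (hab : G.Adj a b) (hbc : G.Adj b c) (hcd : G.Adj c d)
    (hac : ¬ G.Adj a c) (hbd : ¬ G.Adj b d) (had : ¬ G.Adj a d) (hac' : a ≠ c) (hbd' : b ≠ d)
    (had' : a ≠ d) : pathGraph 4 ⊴ G := by
  refine isIndContained_iff_exists_comap_eq.mpr ⟨⟨![a, b, c, d], fun i j hij => ?_⟩, ?_⟩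
  · fin_cases i <;> fin_cases j <;>
      simp_all [hab.ne, hbc.ne, hcd.ne, hab.ne.symm, hbc.ne.symm, hcd.ne.symm, Ne.symm]
  · ext i j
    change G.Adj (![a, b, c, d] i) (![a, b, c, d] j) ↔ _
    fin_cases i <;> fin_cases j <;>
      simp [pathGraph_adj, hab, hbc, hcd, hab.symm, hbc.symm, hcd.symm, hac, hbd, had,
        G.adj_comm _ a, G.adj_comm _ b]

lemma cycleGraph_four_isIndContained (hab : G.Adj a b) (hbc : G.Adj b c) (hcd : G.Adj c d)
    (hda : G.Adj d a) (hac : ¬ G.Adj a c) (hbd : ¬ G.Adj b d) (hac' : a ≠ c) (hbd' : b ≠ d) :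
    cycleGraph 4 ⊴ G := by
  refine isIndContained_iff_exists_comap_eq.mpr ⟨⟨![a, b, c, d], fun i j hij => ?_⟩, ?_⟩
  · fin_cases i <;> fin_cases j <;>
      simp_all [hab.ne, hbc.ne, hcd.ne, hda.ne, hab.ne.symm, hbc.ne.symm, hcd.ne.symm,
        hda.ne.symm, Ne.symm]
  · ext i j
    change G.Adj (![a, b, c, d] i) (![a, b, c, d] j) ↔ _
    fin_cases i <;> fin_cases j <;>
      simp +decide [hab, hbc, hcd, hda, hab.symm, hbc.symm, hcd.symm, hda.symm, hac,
        hbd, G.adj_comm _ a, G.adj_comm _ b]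

lemma hasNestedNeighborhoods_of_not_isIndContained (hP : ¬ pathGraph 4 ⊴ G)
    (hC : ¬ cycleGraph 4 ⊴ G) : G.HasNestedNeighborhoods := by
  intro a b hab
  by_contra! h
  obtain ⟨⟨p, hpa, hpb⟩, ⟨q, hqb, hqa⟩⟩ := And.imp Set.not_subset.mp Set.not_subset.mp h
  simp only [closedNeighborSet, Set.mem_insert_iff, mem_neighborSet, not_or] at hpa hpb hqb hqa
  have hap : G.Adj a p := hpa.resolve_left fun hpa => hpb.2 (hpa ▸ hab.symm)
  have hbq : G.Adj b q := hqb.resolve_left fun hqb => hqa.2 (hqb ▸ hab)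
  have hpq : p ≠ q := fun hpq => hqa.2 (hpq ▸ hap)
  by_cases hpq' : G.Adj p q
  · exact hC (cycleGraph_four_isIndContained hap.symm hab hbq hpq'.symm
      (fun h => hpb.2 h.symm) hqa.2 hpb.1 (Ne.symm hqa.1))
  · exact hP (pathGraph_four_isIndContained hap.symm hab hbq (fun h => hpb.2 h.symm) hqa.2 hpq'
      hpb.1 (Ne.symm hqa.1) hpq)

section NeighborhoodOrder

variable [LinearOrder V]

variable (G) in
def nbhdRank (v : V) : Set V ×ₗ V := toLex (G.closedNeighborSet v, v)

variable {v w₁ w₂ : V}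

lemma closedNeighborSet_subset_of_nbhdRank_lt (h : G.nbhdRank a < G.nbhdRank b) :
    G.closedNeighborSet a ⊆ G.closedNeighborSet b :=
  (Prod.Lex.toLex_lt_toLex'.mp h).1

lemma adj_of_nbhdRank_lt (h : G.nbhdRank a < G.nbhdRank b) : G.Adj a b := by
  have hab : a ≠ b := by rintro rfl; exact h.ne rfl
  rcases closedNeighborSet_subset_of_nbhdRank_lt h (Set.mem_insert a _) with h | h
  · exact absurd h hab
  · exact h.symm

lemma adj_of_nbhdRank_lt_of_nbhdRank_lt (h₁ : G.nbhdRank v < G.nbhdRank w₁)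
    (h₂ : G.nbhdRank v < G.nbhdRank w₂) (hne : w₁ ≠ w₂) : G.Adj w₁ w₂ := by
  rcases closedNeighborSet_subset_of_nbhdRank_lt h₁
    (Set.mem_insert_of_mem v (adj_of_nbhdRank_lt h₂)) with h | h
  · exact absurd h hne.symm
  · exact h

lemma nbhdRank_lt_or_gt_of_subset (h : G.closedNeighborSet a ⊆ G.closedNeighborSet b)
    (hab : a ≠ b) : G.nbhdRank a < G.nbhdRank b ∨ G.nbhdRank b < G.nbhdRank a := by
  simp only [nbhdRank, Prod.Lex.toLex_lt_toLex]
  rcases h.eq_or_ssubset with heq | hss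
  · exact (lt_or_gt_of_ne hab).imp (.inr ⟨heq, ·⟩) (.inr ⟨heq.symm, ·⟩)
  · exact .inl (.inl hss)

lemma HasNestedNeighborhoods.nbhdRank_lt_or_gt (hG : G.HasNestedNeighborhoods)
    (hab : G.Adj a b) : G.nbhdRank a < G.nbhdRank b ∨ G.nbhdRank b < G.nbhdRank a :=
  (hG hab).elim (nbhdRank_lt_or_gt_of_subset · hab.ne)
    (nbhdRank_lt_or_gt_of_subset · hab.ne.symm |>.symm)

end NeighborhoodOrder

open Finset in
theorem HasNestedNeighborhoods.colorable_cliqueNum [Finite V] (hG : G.HasNestedNeighborhoods) :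
    G.Colorable G.cliqueNum := by
  classical
  have := Fintype.ofFinite V
  let _ : LinearOrder V := LinearOrder.lift' _ (Fintype.equivFin V).injective
  let up (v : V) : Finset V := {w | G.nbhdRank v < G.nbhdRank w}
  have card_up_lt (v : V) : #(up v) < G.cliqueNum := by
    have hclique : G.IsClique (insert v (up v) : Finset V) := by
      intro x hx y hy hxy
      simp only [up, coe_insert, coe_filter, mem_univ, true_and, Set.mem_insert_iff,
        Set.mem_ofPred_eq] at hx hy
      rcases hx with rfl | hx <;> rcases hy with rfl | hy
      · exact absurd rfl hxy
      · exact adj_of_nbhdRank_lt hy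
      · exact (adj_of_nbhdRank_lt hx).symm
      · exact adj_of_nbhdRank_lt_of_nbhdRank_lt hx hy hxy
    have := hclique.card_le_cliqueNum
    rwa [card_insert_of_notMem (by simp [up]), Nat.add_one_le_iff] at this
  have card_up_lt_of_lt {a b : V} (h : G.nbhdRank a < G.nbhdRank b) : #(up b) < #(up a) := by
    refine card_lt_card ((ssubset_iff_of_subset fun w hw => ?_).mpr ⟨b, ?_, ?_⟩)
    · simp only [up, mem_filter, mem_univ, true_and] at hw ⊢
      exact h.trans hw
    · simpa [up] using h
    · simp [up]
  refine ⟨Coloring.mk (fun v => ⟨#(up v), card_up_lt v⟩) fun {a b} hab => ?_⟩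
  rcases hG.nbhdRank_lt_or_gt hab with h | h
  · exact Fin.ne_of_gt (card_up_lt_of_lt h)
  · exact Fin.ne_of_lt (card_up_lt_of_lt h)

theorem HasNestedNeighborhoods.chromaticNumber_eq_cliqueNum [Finite V]
    (hG : G.HasNestedNeighborhoods) : G.chromaticNumber = G.cliqueNum :=
  le_antisymm hG.colorable_cliqueNum.chromaticNumber_le G.cliqueNum_le_chromaticNumber

end SimpleGraph

set_option synthInstance.maxSize 2000 in
lemma not_hasCompleteMinor_pathGraph_four_three : ¬ HasCompleteMinor (pathGraph 4) 3 := by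
  intro h
  obtain ⟨b₀, b₁, b₂, h⟩ := h.exists_three_finsets
  revert b₀ b₁ b₂
  decide

lemma hasCompleteMinor_cycleGraph_four_three : HasCompleteMinor (cycleGraph 4) 3 :=
  hasCompleteMinor_iff_exists_finset.mpr ⟨![{0, 1}, {2}, {3}], by decide⟩

lemma achromaticNumber_pathGraph_four_ne_hadwigerNumber :
    achromaticNumber (pathGraph 4) ≠ hadwigerNumber (pathGraph 4) := by
  have h3 : 3 ≤ achromaticNumber (pathGraph 4) :=
    le_achromaticNumber (c := ![0, 1, 2, 0]) (by unfold IsProperColoring; decide)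
      (by unfold IsCompleteColoring; decide)
  have h2 := hadwigerNumber_le_of_not_hasCompleteMinor not_hasCompleteMinor_pathGraph_four_three
  omega

set_option maxRecDepth 2000 in
lemma achromaticNumber_cycleGraph_four_le_two : achromaticNumber (cycleGraph 4) ≤ 2 := by
  refine achromaticNumber_le fun k c hp hc => ?_
  have hk : k ≤ 4 := by simpa using hc.le_card
  by_contra! h
  interval_cases k <;> revert c <;> unfold IsProperColoring IsCompleteColoring <;> decide

lemma achromaticNumber_cycleGraph_four_ne_hadwigerNumber :
    achromaticNumber (cycleGraph 4) ≠ hadwigerNumber (cycleGraph 4) := by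
  have h3 := le_hadwigerNumber hasCompleteMinor_cycleGraph_four_three
  have h2 := achromaticNumber_cycleGraph_four_le_two
  omega

/-- Every αh-perfect graph is perfect. -/
theorem achromatic_hadwiger_perfect_is_perfect {V : Type*} [Fintype V] (G : SimpleGraph V)
    (h : ∀ s : Set V, achromaticNumber (G.induce s) = hadwigerNumber (G.induce s)) :
    ∀ s : Set V, (G.induce s).chromaticNumber = ((G.induce s).cliqueNum : ℕ∞) := by
  have not_isIndContained {P : SimpleGraph (Fin 4)}
      (hP : achromaticNumber P ≠ hadwigerNumber P) (s : Set V) : ¬ P ⊴ G.induce s :=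
    fun hPs => hP (achromaticNumber_eq_hadwigerNumber_of_isIndContained h
      (hPs.trans (Embedding.induce s).isIndContained))
  intro s
  apply HasNestedNeighborhoods.chromaticNumber_eq_cliqueNum
  exact hasNestedNeighborhoods_of_not_isIndContained
    (not_isIndContained achromaticNumber_pathGraph_four_ne_hadwigerNumber s)
    (not_isIndContained achromaticNumber_cycleGraph_four_ne_hadwigerNumber s)
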